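/- arXiv:2603.08398 — 2 statements merged into one kernel-verified Lean document; each statement's English description precedes it below -/
import Mathlib

section
/- With μ := π̃_TC(a) = π(a) + ρ·π_TC(a)·A^{π_TC}(a) a probability distribution and π_Z a softmax policy, for each coordinate Z(a), ∂/∂Z(a) of −KL(π̃_TC ‖ π_Z) minus ∂/∂Z(a) of ρ·Σ_{a'} π_TC(a')·A^{π_TC}(a')·log π_Z(a') equals π(a) − π_Z(a); in particular the gradient of −KL(π̃_TC ‖ π_Z) equals the gradient of ρ·E_{a∼π_TC}[A^{π_TC}(a)·log π_Z(a)] whenever π_Z = π. -/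
open Finset

/-- The partial derivative (w.r.t. the softmax coordinate `Z a`) of
`-KL(π̃_TC ‖ π_Z)` minus the partial derivative of
`ρ * ∑ a', π_TC a' * A^{π_TC} a' * log (π_Z a')` equals `π a - π_Z a`;
in particular the two gradients agree whenever `π_Z = π`. -/
theorem neg_KL_minus_surrogate_partial_deriv
    {A : Type*} [Fintype A] [Nonempty A] [DecidableEq A]
    (π πTC r : A → ℝ) (ρ : ℝ) (hρ : 0 < ρ)
    (hπ : ∀ a, 0 ≤ π a) (hπsum : ∑ a, π a = 1)
    (hπTC : ∀ a, 0 < πTC a) (hπTCsum : ∑ a, πTC a = 1)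
    (htilde_pos : ∀ a, 0 < π a + ρ * πTC a * (r a - ∑ a', πTC a' * r a'))
    (htilde_sum : ∑ a, (π a + ρ * πTC a * (r a - ∑ a', πTC a' * r a')) = 1)
    (Z : A → ℝ) (a : A) :
    (HasDerivAt
      (fun t : ℝ =>
        (-(∑ a', (π a' + ρ * πTC a' * (r a' - ∑ b, πTC b * r b)) *
            Real.log ((π a' + ρ * πTC a' * (r a' - ∑ b, πTC b * r b)) /
              (Real.exp (Function.update Z a t a') /
                ∑ a'', Real.exp (Function.update Z a t a''))))) -
        ρ * ∑ a', πTC a' * (r a' - ∑ b, πTC b * r b) * Real.log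
          (Real.exp (Function.update Z a t a') /
            ∑ a'', Real.exp (Function.update Z a t a'')))
      (π a - Real.exp (Z a) / ∑ a'', Real.exp (Z a''))
      (Z a)) ∧
    ((∀ b, Real.exp (Z b) / (∑ a'', Real.exp (Z a'')) = π b) →
      π a - Real.exp (Z a) / ∑ a'', Real.exp (Z a'') = 0) := by
  have hSpos : ∀ t : ℝ, (0:ℝ) < ∑ a'', Real.exp (Function.update Z a t a'') :=
    fun t => Finset.sum_pos (fun i _ => Real.exp_pos _) Finset.univ_nonempty
  constructor
  · set C3 : ℝ := ∑ a'' ∈ Finset.univ.erase a, Real.exp (Z a'') with hC3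
    have hC3nonneg : 0 ≤ C3 := Finset.sum_nonneg fun i _ => (Real.exp_pos _).le
    have hSsplit : ∀ t : ℝ,
        (∑ a'', Real.exp (Function.update Z a t a'')) = Real.exp t + C3 := by
      intro t
      rw [← Finset.add_sum_erase _ _ (Finset.mem_univ a), Function.update_self, hC3]
      congr 1
      exact Finset.sum_congr rfl fun b hb => by
        rw [Function.update_of_ne (Finset.ne_of_mem_erase hb)]
    have hc0 : ∑ a', πTC a' * (r a' - ∑ b, πTC b * r b) = 0 := by
      simp only [mul_sub]
      rw [Finset.sum_sub_distrib, ← Finset.sum_mul, hπTCsum, one_mul, sub_self]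
    set C1 : ℝ := -(∑ a', (π a' + ρ * πTC a' * (r a' - ∑ b, πTC b * r b)) *
        Real.log (π a' + ρ * πTC a' * (r a' - ∑ b, πTC b * r b))) with hC1
    set C2 : ℝ := ∑ a' ∈ Finset.univ.erase a, π a' * Z a' with hC2
    have key : ∀ t : ℝ,
        (-(∑ a', (π a' + ρ * πTC a' * (r a' - ∑ b, πTC b * r b)) *
            Real.log ((π a' + ρ * πTC a' * (r a' - ∑ b, πTC b * r b)) /
              (Real.exp (Function.update Z a t a') /
                ∑ a'', Real.exp (Function.update Z a t a''))))) -
        ρ * ∑ a', πTC a' * (r a' - ∑ b, πTC b * r b) * Real.log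
          (Real.exp (Function.update Z a t a') /
            ∑ a'', Real.exp (Function.update Z a t a''))
        = (C1 + C2) + π a * t - Real.log (Real.exp t + C3) := by
      intro t
      have hL : ∀ a' : A,
          Real.log (Real.exp (Function.update Z a t a') /
            ∑ a'', Real.exp (Function.update Z a t a''))
          = Function.update Z a t a' -
            Real.log (∑ a'', Real.exp (Function.update Z a t a'')) := by
        intro a'
        rw [Real.log_div (Real.exp_ne_zero _) (hSpos t).ne', Real.log_exp]
      have hL2 : ∀ a' : A,
          Real.log ((π a' + ρ * πTC a' * (r a' - ∑ b, πTC b * r b)) /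
            (Real.exp (Function.update Z a t a') /
              ∑ a'', Real.exp (Function.update Z a t a'')))
          = Real.log (π a' + ρ * πTC a' * (r a' - ∑ b, πTC b * r b)) -
            (Function.update Z a t a' -
              Real.log (∑ a'', Real.exp (Function.update Z a t a''))) := by
        intro a'
        rw [Real.log_div (htilde_pos a').ne'
          (div_pos (Real.exp_pos _) (hSpos t)).ne', hL a']
      simp only [hL, hL2]
      set L : ℝ := Real.log (∑ a'', Real.exp (Function.update Z a t a'')) with hLdef
      have hLval : L = Real.log (Real.exp t + C3) := by rw [hLdef, hSsplit t]
      have e1 : ∑ a', (π a' + ρ * πTC a' * (r a' - ∑ b, πTC b * r b)) *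
            (Real.log (π a' + ρ * πTC a' * (r a' - ∑ b, πTC b * r b)) -
              (Function.update Z a t a' - L))
          = (∑ a', (π a' + ρ * πTC a' * (r a' - ∑ b, πTC b * r b)) *
              Real.log (π a' + ρ * πTC a' * (r a' - ∑ b, πTC b * r b)))
            - (∑ a', (π a' + ρ * πTC a' * (r a' - ∑ b, πTC b * r b)) *
              Function.update Z a t a') + L := by
        simp only [show ∀ x : A, (π x + ρ * πTC x * (r x - ∑ b, πTC b * r b)) *
            (Real.log (π x + ρ * πTC x * (r x - ∑ b, πTC b * r b)) -
              (Function.update Z a t x - L))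
          = ((π x + ρ * πTC x * (r x - ∑ b, πTC b * r b)) *
              Real.log (π x + ρ * πTC x * (r x - ∑ b, πTC b * r b)) -
            (π x + ρ * πTC x * (r x - ∑ b, πTC b * r b)) *
              Function.update Z a t x) +
            (π x + ρ * πTC x * (r x - ∑ b, πTC b * r b)) * L
          from fun x => by ring]
        rw [Finset.sum_add_distrib, Finset.sum_sub_distrib, ← Finset.sum_mul,
          htilde_sum, one_mul]
      have e2 : ∑ a', πTC a' * (r a' - ∑ b, πTC b * r b) *
            (Function.update Z a t a' - L)
          = ∑ a', πTC a' * (r a' - ∑ b, πTC b * r b) *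
              Function.update Z a t a' := by
        simp only [show ∀ x : A, πTC x * (r x - ∑ b, πTC b * r b) *
            (Function.update Z a t x - L)
          = πTC x * (r x - ∑ b, πTC b * r b) * Function.update Z a t x -
            πTC x * (r x - ∑ b, πTC b * r b) * L from fun x => by ring]
        rw [Finset.sum_sub_distrib, ← Finset.sum_mul, hc0, zero_mul, sub_zero]
      rw [e1, e2, hLval]
      have e3 : (∑ a', (π a' + ρ * πTC a' * (r a' - ∑ b, πTC b * r b)) *
              Function.update Z a t a')
            - ρ * ∑ a', πTC a' * (r a' - ∑ b, πTC b * r b) *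
              Function.update Z a t a'
          = ∑ a', π a' * Function.update Z a t a' := by
        rw [Finset.mul_sum, ← Finset.sum_sub_distrib]
        exact Finset.sum_congr rfl fun b _ => by ring
      have e4 : ∑ a', π a' * Function.update Z a t a' = π a * t + C2 := by
        rw [← Finset.add_sum_erase _ _ (Finset.mem_univ a), Function.update_self, hC2]
        congr 1
        exact Finset.sum_congr rfl fun b hb => by
          rw [Function.update_of_ne (Finset.ne_of_mem_erase hb)]
      rw [hC1]
      have := e3
      nlinarith [e3, e4]
    have hpos : (0:ℝ) < Real.exp (Z a) + C3 := by positivity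
    have hd1 : HasDerivAt (fun t : ℝ => Real.exp t + C3) (Real.exp (Z a)) (Z a) :=
      (Real.hasDerivAt_exp (Z a)).add_const C3
    have hd2 : HasDerivAt (fun t : ℝ => Real.log (Real.exp t + C3))
        (Real.exp (Z a) / (Real.exp (Z a) + C3)) (Z a) := hd1.log hpos.ne'
    have hd3 : HasDerivAt (fun t : ℝ => (C1 + C2) + π a * t - Real.log (Real.exp t + C3))
        (π a - Real.exp (Z a) / (Real.exp (Z a) + C3)) (Z a) := by
      have : HasDerivAt (fun t : ℝ => (C1 + C2) + π a * t) (π a) (Z a) := by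
        simpa using ((hasDerivAt_id (Z a)).const_mul (π a)).const_add (C1 + C2)
      exact this.sub hd2
    have hSZ : (∑ a'', Real.exp (Z a'')) = Real.exp (Z a) + C3 := by
      have := hSsplit (Z a)
      rwa [Function.update_eq_self] at this
    rw [hSZ]
    exact hd3.congr_of_eventuallyEq (Filter.Eventually.of_forall fun t => key t)
  · intro h
    rw [h a, sub_self]
end

section
/- (Surrogate objective lower bound.) Let A be a finite action set, r : A → {0,1}, A⁺ = {a : r(a)=1}, π and π_TC probability mass functions on A, λ̃ > 0, π_mix = (π + λ̃·π_TC)/(1+λ̃), and φ = min{λ̃/(1+λ̃)², 1/(1+λ̃)²}. Suppose L : A → ℝ satisfies L(a) ≤ 0 for all a (e.g., L(a) = log π_θ(a) for a policy π_θ). Then Σ_{a∈A⁺} π_mix(a)·A^{π_mix}(a)·L(a) ≤ φ·[ Σ_{a∈A⁺} π(a)·A^π(a)·L(a) + λ̃·Σ_{a∈A⁺} π_TC(a)·A^{π_TC}(a)·L(a) ], provided for each a ∈ A⁺ either A^π(a) ≤ A^{π_mix}(a) ≤ A^{π_TC}(a) or A^{π_TC}(a) ≤ A^{π_mix}(a)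 ≤ A^π(a) (which always holds since A^{π_mix} is a convex combination of A^π and A^{π_TC}). -/
/-!
On `A⁺` the advantage of the mixture is the mixture of the advantages, so each summand on the
left is `((p + λq)/(1+λ)) · ((u + λv)/(1+λ)) · L` with `p, q, u, v ≥ 0`, and expanding
`(p + λq)(u + λv) ≥ pu + λ²qv ≥ min λ 1 · (pu + λqv)` gives the bound termwise, since
`φ = min λ 1 / (1+λ)²`; the sign of `L` reverses the inequality.
-/

open Finset

theorem min_mul_add_le_add_mul_add {lam p q u v : ℝ} (hlam : 0 ≤ lam)
    (hp : 0 ≤ p) (hq : 0 ≤ q) (hu : 0 ≤ u) (hv : 0 ≤ v) :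
    min lam 1 * (p * u + lam * (q * v)) ≤ (p + lam * q) * (u + lam * v) := by
  have hpu : min lam 1 * (p * u) ≤ p * u :=
    mul_le_of_le_one_left (mul_nonneg hp hu) (min_le_right _ _)
  have hqv : min lam 1 * (lam * (q * v)) ≤ lam * (lam * (q * v)) :=
    mul_le_mul_of_nonneg_right (min_le_left _ _) (by positivity)
  nlinarith [mul_nonneg hp hv, mul_nonneg hq hu]

section

variable {A : Type*} [Fintype A]

noncomputable def advantage (μ r : A → ℝ) (a : A) : ℝ := r a - ∑ a', μ a' * r a'

noncomputable def mixture (μ ν : A → ℝ) (lam : ℝ) (a : A) : ℝ := (μ a + lam * ν a) / (1 + lam)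

theorem advantage_mixture {μ ν r : A → ℝ} {lam : ℝ} (hlam : 1 + lam ≠ 0) (a : A) :
    advantage (mixture μ ν lam) r a =
      (advantage μ r a + lam * advantage ν r a) / (1 + lam) := by
  simp only [advantage, mixture, div_mul_eq_mul_div, ← sum_div, add_mul, sum_add_distrib,
    mul_assoc, ← mul_sum]
  field_simp
  ring

theorem advantage_nonneg_of_eq_one {μ r : A → ℝ} (hμ : ∀ a, 0 ≤ μ a) (hμsum : ∑ a, μ a = 1)
    (hr : ∀ a, r a ≤ 1) {a : A} (ha : r a = 1) : 0 ≤ advantage μ r a := by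
  have hmean : ∑ a', μ a' * r a' ≤ ∑ a', μ a' :=
    sum_le_sum fun a' _ ↦ mul_le_of_le_one_right (hμ a') (hr a')
  rw [advantage, ha, sub_nonneg]
  linarith

theorem mixture_mul_advantage_mul_le {μ ν r : A → ℝ} {lam c : ℝ}
    (hlam : 0 < lam) (hc : c ≤ 0) {a : A} (hμ : 0 ≤ μ a) (hν : 0 ≤ ν a)
    (hAμ : 0 ≤ advantage μ r a) (hAν : 0 ≤ advantage ν r a) :
    mixture μ ν lam a * advantage (mixture μ ν lam) r a * c ≤
      min (lam / (1 + lam) ^ 2) (1 / (1 + lam) ^ 2) *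
        (μ a * advantage μ r a * c + lam * (ν a * advantage ν r a * c)) := by
  have hlam1 : 0 < 1 + lam := by linarith
  have key := min_mul_add_le_add_mul_add hlam.le hμ hν hAμ hAν
  have key' : min (lam / (1 + lam) ^ 2) (1 / (1 + lam) ^ 2) *
        (μ a * advantage μ r a + lam * (ν a * advantage ν r a)) ≤
      mixture μ ν lam a * advantage (mixture μ ν lam) r a := by
    rw [min_div_div_right (by positivity), advantage_mixture hlam1.ne', mixture,
      div_mul_div_comm, ← sq, div_mul_eq_mul_div]
    exact div_le_div_of_nonneg_right key (by positivity)
  linear_combination mul_le_mul_of_nonpos_right key' hc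

end

theorem surrogate_objective_lower_bound_general
    {A : Type*} [Fintype A]
    (π πTC r L : A → ℝ) (lam : ℝ) (hlam : 0 < lam)
    (hπ : ∀ a, 0 ≤ π a) (hπsum : ∑ a, π a = 1)
    (hπTC : ∀ a, 0 ≤ πTC a) (hπTCsum : ∑ a, πTC a = 1)
    (hr : ∀ a, r a = 0 ∨ r a = 1)
    (hL : ∀ a, L a ≤ 0) :
    ∑ a ∈ Finset.univ.filter (fun a => r a = 1),
        ((π a + lam * πTC a) / (1 + lam)) *
          (r a - ∑ a', ((π a' + lam * πTC a') / (1 + lam)) * r a') * L a ≤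
      min (lam / (1 + lam) ^ 2) (1 / (1 + lam) ^ 2) *
        ((∑ a ∈ Finset.univ.filter (fun a => r a = 1),
            π a * (r a - ∑ a', π a' * r a') * L a) +
          lam * ∑ a ∈ Finset.univ.filter (fun a => r a = 1),
            πTC a * (r a - ∑ a', πTC a' * r a') * L a) := by
  have hr1 : ∀ a, r a ≤ 1 := fun a ↦
    (hr a).elim (fun h ↦ h ▸ zero_le_one) le_of_eq
  rw [mul_sum, ← sum_add_distrib, mul_sum]
  refine sum_le_sum fun a ha ↦ ?_
  have hra : r a = 1 := (mem_filter.1 ha).2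
  exact mixture_mul_advantage_mul_le hlam (hL a) (hπ a) (hπTC a)
    (advantage_nonneg_of_eq_one hπ hπsum hr1 hra)
    (advantage_nonneg_of_eq_one hπTC hπTCsum hr1 hra)

/-- Surrogate objective lower bound (Theorem 4.4 of the paper). -/
theorem surrogate_objective_lower_bound
    {A : Type*} [Fintype A] [Nonempty A]
    (π πTC r L : A → ℝ) (lam : ℝ) (hlam : 0 < lam)
    (hπ : ∀ a, 0 ≤ π a) (hπsum : ∑ a, π a = 1)
    (hπTC : ∀ a, 0 ≤ πTC a) (hπTCsum : ∑ a, πTC a = 1)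
    (hr : ∀ a, r a = 0 ∨ r a = 1)
    (hL : ∀ a, L a ≤ 0)
    (hsand : ∀ a, r a = 1 →
      ((r a - ∑ a', π a' * r a') ≤
          (r a - ∑ a', ((π a' + lam * πTC a') / (1 + lam)) * r a') ∧
        (r a - ∑ a', ((π a' + lam * πTC a') / (1 + lam)) * r a') ≤
          (r a - ∑ a', πTC a' * r a')) ∨
      ((r a - ∑ a', πTC a' * r a') ≤
          (r a - ∑ a', ((π a' + lam * πTC a') / (1 + lam)) * r a') ∧
        (r a - ∑ a', ((π a' + lam * πTC a') / (1 + lam)) * r a') ≤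
          (r a - ∑ a', π a' * r a'))) :
    ∑ a ∈ Finset.univ.filter (fun a => r a = 1),
        ((π a + lam * πTC a) / (1 + lam)) *
          (r a - ∑ a', ((π a' + lam * πTC a') / (1 + lam)) * r a') * L a ≤
      min (lam / (1 + lam) ^ 2) (1 / (1 + lam) ^ 2) *
        ((∑ a ∈ Finset.univ.filter (fun a => r a = 1),
            π a * (r a - ∑ a', π a' * r a') * L a) +
          lam * ∑ a ∈ Finset.univ.filter (fun a => r a = 1),
            πTC a * (r a - ∑ a', πTC a' * r a') * L a) :=
  surrogate_objective_lower_bound_general π πTC r L lam hlam hπ hπsum hπTC hπTCsum hr hL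
end
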